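/- arXiv:1912.11182 — 6 statements merged into one kernel-verified Lean document; each statement's English description precedes it below -/
import Mathlib

section
/- Assume condition S1 and let N ≥ 3. Then for every real sequence w_1, …, w_N and every index k with 2 ≤ k ≤ N−1, one has 2·w_k·Σ_{j=1}^k b^{(k)}_{k−j} w_j ≥ (r_{k+1}/(1+r_{k+1}))·w_k²/τ_k − (r_k/(1+r_k))·w_{k−1}²/τ_{k−1}. -/
open Finset

/-- BDF2 convolution kernels `b^{(n)}_j` built from the step sizes `τ`. -/
noncomputable def bdf2 (τ : ℕ → ℝ) (n j : ℕ) : ℝ :=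
  if n = 1 then (if j = 0 then 1 / τ 1 else 0)
  else if j = 0 then (1 + 2 * (τ n / τ (n - 1))) / (τ n * (1 + τ n / τ (n - 1)))
  else if j = 1 then -(τ n / τ (n - 1)) ^ 2 / (τ n * (1 + τ n / τ (n - 1)))
  else 0

/-- DOC kernels: `doc τ n g = θ^{(n)}_g`, defined by the recursive procedure
`θ^{(n)}_0 = 1/b^{(n)}_0`, `θ^{(n)}_{n-k} = -(1/b^{(k)}_0) ∑_{j=k+1}^n θ^{(n)}_{n-j} b^{(j)}_{j-k}`. -/
noncomputable def doc (τ : ℕ → ℝ) (n : ℕ) : ℕ → ℝ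
  | 0 => 1 / bdf2 τ n 0
  | (g + 1) =>
    -(1 / bdf2 τ (n - (g + 1)) 0) *
      ∑ i ∈ (Finset.range (g + 1)).attach,
        doc τ n i.1 * bdf2 τ (n - i.1) (g + 1 - i.1)
  decreasing_by exact Finset.mem_range.mp i.2

/-- The variable-step BDF2 formula `D_2 v^n = ∑_{k=1}^n b^{(n)}_{n-k} (v^k - v^{k-1})`. -/
noncomputable def D2 {V : Type*} [AddCommGroup V] [Module ℝ V]
    (τ : ℕ → ℝ) (v : ℕ → V) (n : ℕ) : V :=
  ∑ k ∈ Finset.Icc 1 n, bdf2 τ n (n - k) • (v k - v (k - 1))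

/-- Time levels `t_n = τ_1 + ⋯ + τ_n`. -/
noncomputable def tlv (τ : ℕ → ℝ) (n : ℕ) : ℝ := ∑ i ∈ Finset.Icc 1 n, τ i

/-! Only `b^{(k)}_0` and `b^{(k)}_1` are nonzero, and with `r = r_k`, `s = r_{k+1}` the claim
becomes a quadratic inequality in `(w_k, w_{k-1})`. Completing the square,
`2(1+2r)a² - 2r²ab + r²b² = (2+4r-r²)a² + r²(a-b)²`, reduces it to
`s/(1+s) ≤ (2+4r-r²)/(1+r)`. Under S1 the left side is at most `R/(1+R)` for `R = (3+√17)/2`,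
and since `R² = 3R + 2` the right side is at least `R/(1+R)` on `[0, R]`, with equality at
`r = R`: this is where the constant of S1 comes from. -/

lemma bdf2_zero_of_ne_one (τ : ℕ → ℝ) {n : ℕ} (hn : n ≠ 1) :
    bdf2 τ n 0 = (1 + 2 * (τ n / τ (n - 1))) / (τ n * (1 + τ n / τ (n - 1))) := by
  simp [bdf2, hn]

lemma bdf2_one_of_ne_one (τ : ℕ → ℝ) {n : ℕ} (hn : n ≠ 1) :
    bdf2 τ n 1 = -(τ n / τ (n - 1)) ^ 2 / (τ n * (1 + τ n / τ (n - 1))) := by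
  simp [bdf2, hn]

lemma bdf2_eq_zero_of_two_le (τ : ℕ → ℝ) (n : ℕ) {j : ℕ} (hj : 2 ≤ j) : bdf2 τ n j = 0 := by
  simp [bdf2, show j ≠ 0 by omega, show j ≠ 1 by omega]

lemma sum_Icc_bdf2_mul (τ w : ℕ → ℝ) {n : ℕ} (hn : 2 ≤ n) :
    ∑ j ∈ Icc 1 n, bdf2 τ n (n - j) * w j = bdf2 τ n 0 * w n + bdf2 τ n 1 * w (n - 1) := by
  rw [sum_eq_add_of_mem n (n - 1) (by simp; omega) (by simp; omega) (by omega)]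
  · rw [Nat.sub_self, Nat.sub_sub_self (by omega)]
  · intro j hj hjn
    rw [mem_Icc] at hj
    rw [bdf2_eq_zero_of_two_le τ n (by omega), zero_mul]

lemma sq_three_add_sqrt_seventeen_div_two :
    ((3 + √17) / 2) ^ 2 = 3 * ((3 + √17) / 2) + 2 := by
  linear_combination (1 / 4 : ℝ) * Real.sq_sqrt (show (0 : ℝ) ≤ 17 by norm_num)

lemma mul_one_add_le_of_sq_eq {R r : ℝ} (hR : R ^ 2 = 3 * R + 2) (hr : 0 ≤ r) (hrR : r ≤ R) :
    R * (1 + r) ≤ (1 + R) * (2 + 4 * r - r ^ 2) := by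
  have hR2 : 2 ≤ R := by nlinarith
  have hfactor : (1 + R) * (2 + 4 * r - r ^ 2) - R * (1 + r) = (R - r) * ((1 + R) * r + R - 2) := by
    linear_combination (-r - 1) * hR
  have hprod : 0 ≤ (R - r) * ((1 + R) * r + R - 2) :=
    mul_nonneg (sub_nonneg.mpr hrR) (by nlinarith)
  linarith

lemma mul_one_add_le_of_le_of_sq_eq {R r s : ℝ} (hR : R ^ 2 = 3 * R + 2) (hr : 0 < r)
    (hs : 0 < s) (hrR : r ≤ R) (hsR : s ≤ R) :
    s * (1 + r) ≤ (1 + s) * (2 + 4 * r - r ^ 2) := by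
  have hR0 : 0 < R := hs.trans_le hsR
  have hsR' : s * (1 + R) ≤ R * (1 + s) := by linarith
  have hrR' := mul_one_add_le_of_sq_eq hR hr.le hrR
  suffices s * (1 + r) * (1 + R) ≤ (1 + s) * (2 + 4 * r - r ^ 2) * (1 + R) from
    le_of_mul_le_mul_right this (by positivity)
  calc s * (1 + r) * (1 + R) = s * (1 + R) * (1 + r) := by ring
    _ ≤ R * (1 + s) * (1 + r) := by gcongr
    _ = (1 + s) * (R * (1 + r)) := by ring
    _ ≤ (1 + s) * ((1 + R) * (2 + 4 * r - r ^ 2)) := by gcongr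
    _ = (1 + s) * (2 + 4 * r - r ^ 2) * (1 + R) := by ring

lemma bdf2_quadratic_form_ge {T U s a b : ℝ} (hT : 0 < T) (hU : 0 < U) (hs : 0 < s)
    (hkey : s * (1 + T / U) ≤ (1 + s) * (2 + 4 * (T / U) - (T / U) ^ 2)) :
    2 * a * ((1 + 2 * (T / U)) / (T * (1 + T / U)) * a + -(T / U) ^ 2 / (T * (1 + T / U)) * b) ≥
      s / (1 + s) * a ^ 2 / T - T / U / (1 + T / U) * b ^ 2 / U := by
  set r := T / U with hr_def
  have hr : 0 < r := div_pos hT hU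
  have hT_eq : T = r * U := by rw [hr_def, div_mul_cancel₀ T hU.ne']
  clear_value r
  have hkey_a : 0 ≤ (1 + s) * (2 + 4 * r - r ^ 2) * a ^ 2 - s * (1 + r) * a ^ 2 := by
    nlinarith [mul_nonneg (sq_nonneg a) (sub_nonneg.mpr hkey)]
  have hnum : 0 ≤ (1 + s) * (2 * (1 + 2 * r) * a ^ 2 - 2 * r ^ 2 * a * b + r ^ 2 * b ^ 2) -
      s * (1 + r) * a ^ 2 := by
    nlinarith [hkey_a, mul_nonneg (mul_nonneg hs.le (sq_nonneg r)) (sq_nonneg (a - b))]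
  rw [ge_iff_le, ← sub_nonneg]
  refine (div_nonneg hnum (by positivity : 0 ≤ r * U * (1 + r) * (1 + s))).trans_eq ?_
  subst hT_eq
  field_simp
  ring

theorem bdf2_kernel_lower_bound_general
    (N : ℕ) (τ : ℕ → ℝ)
    (hτ : ∀ k, 1 ≤ k → k ≤ N → 0 < τ k)
    (hS1 : ∀ k, 2 ≤ k → k ≤ N →
      0 < τ k / τ (k - 1) ∧ τ k / τ (k - 1) ≤ (3 + Real.sqrt 17) / 2)
    (w : ℕ → ℝ) (k : ℕ) (hk2 : 2 ≤ k) (hkN : k ≤ N - 1) :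
    2 * w k * ∑ j ∈ Finset.Icc 1 k, bdf2 τ k (k - j) * w j ≥
      (τ (k + 1) / τ k) / (1 + τ (k + 1) / τ k) * (w k) ^ 2 / τ k
        - (τ k / τ (k - 1)) / (1 + τ k / τ (k - 1)) * (w (k - 1)) ^ 2 / τ (k - 1) := by
  have hT : 0 < τ k := hτ k (by omega) (by omega)
  have hU : 0 < τ (k - 1) := hτ (k - 1) (by omega) (by omega)
  obtain ⟨hr, hrR⟩ := hS1 k hk2 (by omega)
  obtain ⟨hs, hsR⟩ := hS1 (k + 1) (by omega) (by omega)
  rw [Nat.add_sub_cancel] at hs hsR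
  have hk1 : k ≠ 1 := by omega
  rw [sum_Icc_bdf2_mul τ w hk2, bdf2_zero_of_ne_one τ hk1, bdf2_one_of_ne_one τ hk1]
  exact bdf2_quadratic_form_ge hT hU hs
    (mul_one_add_le_of_le_of_sq_eq sq_three_add_sqrt_seventeen_div_two hr hs hrR hsR)

/-- the kernel inequality of Lemma 2.1 for `2 ≤ k ≤ N-1` under condition S1. -/
theorem bdf2_kernel_lower_bound
    (N : ℕ) (hN : 3 ≤ N) (τ : ℕ → ℝ)
    (hτ : ∀ k, 1 ≤ k → k ≤ N → 0 < τ k)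
    (hS1 : ∀ k, 2 ≤ k → k ≤ N →
      0 < τ k / τ (k - 1) ∧ τ k / τ (k - 1) ≤ (3 + Real.sqrt 17) / 2)
    (w : ℕ → ℝ) (k : ℕ) (hk2 : 2 ≤ k) (hkN : k ≤ N - 1) :
    2 * w k * ∑ j ∈ Finset.Icc 1 k, bdf2 τ k (k - j) * w j ≥
      (τ (k + 1) / τ k) / (1 + τ (k + 1) / τ k) * (w k) ^ 2 / τ k
        - (τ k / τ (k - 1)) / (1 + τ k / τ (k - 1)) * (w (k - 1)) ^ 2 / τ (k - 1) :=
  bdf2_kernel_lower_bound_general N τ hτ hS1 w k hk2 hkN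
end

section
/- Assume condition S1. Then the BDF2 kernels are positive semi-definite: for every 1 ≤ n ≤ N and every real sequence w_1, …, w_n, Σ_{k=1}^n w_k · Σ_{j=1}^k b^{(k)}_{k−j} w_j ≥ 0. -/
open Finset

/-!
With the energy `E_k = w_k² / (2 τ_k)`, the `k`-th summand `w_k (b₀⁽ᵏ⁾ w_k + b₁⁽ᵏ⁾ w_{k-1})`
dominates `E_k - E_{k-1}` for `k ≥ 2` (and `E_1` for `k = 1`), so the sum is at least `E_n ≥ 0`.
With `r = r_k`, the step inequality is the nonnegativity of the binary form
`(1 + 3r) a² - 2r² ab + r(1 + r) b²`, i.e. `r³ ≤ (1 + r)(1 + 3r)`; this follows from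
`r² ≤ 3r + 2`, which is S1 since `(3 + √17)/2` is the positive root of `r² = 3r + 2`.
-/

lemma sq_le_three_mul_add_two {r : ℝ} (hr : r ≤ (3 + √17) / 2) (hr0 : 0 < r) :
    r ^ 2 ≤ 3 * r + 2 := by
  have h17 : √17 ^ 2 = 17 := Real.sq_sqrt (by norm_num)
  have h3 : 3 ≤ √17 := Real.le_sqrt_of_sq_le (by norm_num)
  nlinarith [mul_nonneg (sub_nonneg.2 hr) (by linarith : 0 ≤ r - (3 - √17) / 2)]

lemma bdf2_quadratic_nonneg {r : ℝ} (hr0 : 0 < r) (hr : r ^ 2 ≤ 3 * r + 2) (a b : ℝ) :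
    0 ≤ (1 + 3 * r) * a ^ 2 - 2 * r ^ 2 * a * b + r * (1 + r) * b ^ 2 := by
  have hdisc : r ^ 4 ≤ r * (1 + r) * (1 + 3 * r) := by nlinarith
  have : 0 ≤ r * (1 + r) * ((1 + 3 * r) * a ^ 2 - 2 * r ^ 2 * a * b + r * (1 + r) * b ^ 2) := by
    nlinarith [sq_nonneg (r * (1 + r) * b - r ^ 2 * a), mul_le_mul_of_nonneg_right hdisc (sq_nonneg a)]
  exact (mul_nonneg_iff_of_pos_left (by positivity)).mp this

lemma le_sum_Icc_of_sub_le {α : Type*} [AddCommGroup α] [PartialOrder α] [IsOrderedAddMonoid α]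
    {f g : ℕ → α} {n : ℕ} (hn : 1 ≤ n) (h₁ : g 1 ≤ f 1)
    (hstep : ∀ k, 2 ≤ k → k ≤ n → g k - g (k - 1) ≤ f k) : g n ≤ ∑ k ∈ Icc 1 n, f k := by
  induction n, hn using Nat.le_induction with
  | base => simpa using h₁
  | succ n hn ih =>
    rw [sum_Icc_succ_top (by omega)]
    have hlast : g (n + 1) - g n ≤ f (n + 1) := hstep (n + 1) (by omega) le_rfl
    have hprefix := ih fun k hk hkn => hstep k hk (by omega)
    calc g (n + 1) = g n + (g (n + 1) - g n) := by abel
      _ ≤ _ := add_le_add hprefix hlast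

lemma bdf2_conv_of_two_le (τ w : ℕ → ℝ) {k : ℕ} (hk : 2 ≤ k) :
    ∑ j ∈ Icc 1 k, bdf2 τ k (k - j) * w j = bdf2 τ k 0 * w k + bdf2 τ k 1 * w (k - 1) := by
  rw [sum_eq_add_of_mem k (k - 1) (by simp; omega) (by simp; omega) (by omega)]
  · rw [Nat.sub_self, Nat.sub_sub_self (by omega)]
  · intro j hj hne
    simp only [mem_Icc] at hj
    simp only [bdf2, if_neg (show k ≠ 1 by omega), if_neg (show k - j ≠ 0 by omega),
      if_neg (show k - j ≠ 1 by omega), zero_mul]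

lemma bdf2_energy_step_le (τ : ℕ → ℝ) {k : ℕ} (hk : 2 ≤ k) (hprev : 0 < τ (k - 1)) (hcur : 0 < τ k)
    (hr : (τ k / τ (k - 1)) ^ 2 ≤ 3 * (τ k / τ (k - 1)) + 2) (a b : ℝ) :
    a ^ 2 / (2 * τ k) - b ^ 2 / (2 * τ (k - 1)) ≤ a * (bdf2 τ k 0 * a + bdf2 τ k 1 * b) := by
  simp only [bdf2, if_neg (show k ≠ 1 by omega), if_pos, one_ne_zero, if_false]
  obtain ⟨r, hr0, hτk⟩ : ∃ r, 0 < r ∧ τ k = r * τ (k - 1) :=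
    ⟨τ k / τ (k - 1), div_pos hcur hprev, by field_simp⟩
  generalize τ (k - 1) = σ at *
  rw [hτk, mul_div_cancel_right₀ _ hprev.ne'] at hr ⊢
  have key : a * ((1 + 2 * r) / (r * σ * (1 + r)) * a + -r ^ 2 / (r * σ * (1 + r)) * b) -
      (a ^ 2 / (2 * (r * σ)) - b ^ 2 / (2 * σ)) =
      ((1 + 3 * r) * a ^ 2 - 2 * r ^ 2 * a * b + r * (1 + r) * b ^ 2) / (2 * r * σ * (1 + r)) := by
    field_simp
    ring
  rw [← sub_nonneg, key]
  have := bdf2_quadratic_nonneg hr0 hr a b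
  positivity

/-- positive semi-definiteness of the BDF2 kernels under condition S1. -/
theorem bdf2_kernels_posSemidef
    (N : ℕ) (τ : ℕ → ℝ)
    (hτ : ∀ k, 1 ≤ k → k ≤ N → 0 < τ k)
    (hS1 : ∀ k, 2 ≤ k → k ≤ N →
      0 < τ k / τ (k - 1) ∧ τ k / τ (k - 1) ≤ (3 + Real.sqrt 17) / 2) :
    ∀ n, 1 ≤ n → n ≤ N → ∀ w : ℕ → ℝ,
      0 ≤ ∑ k ∈ Finset.Icc 1 n, w k * ∑ j ∈ Finset.Icc 1 k, bdf2 τ k (k - j) * w j := by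
  intro n hn hnN w
  have henergy : w n ^ 2 / (2 * τ n) ≤
      ∑ k ∈ Icc 1 n, w k * ∑ j ∈ Icc 1 k, bdf2 τ k (k - j) * w j := by
    refine le_sum_Icc_of_sub_le (g := fun k => w k ^ 2 / (2 * τ k)) hn ?_ ?_
    · have hτ₁ := hτ 1 le_rfl (by omega)
      simp only [Icc_self, sum_singleton, bdf2, if_true, Nat.sub_self]
      rw [div_le_iff₀ (by positivity)]
      field_simp
      nlinarith [sq_nonneg (w 1)]
    · intro k hk hkn
      obtain ⟨hr0, hr⟩ := hS1 k hk (by omega)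
      rw [bdf2_conv_of_two_le τ w hk]
      exact bdf2_energy_step_le τ hk (hτ (k - 1) (by omega) (by omega)) (hτ k (by omega) (by omega))
        (sq_le_three_mul_add_two hr hr0) _ _
  have hτn := hτ n hn hnN
  exact le_trans (by positivity) henergy
end

section
/- Let V be a real vector space, let τ_1, …, τ_N be positive time steps, and let v^0, v^1, …, v^N be any sequence in V. Then for every 1 ≤ n ≤ N, Σ_{j=1}^n θ^{(n)}_{n−j} D_2 v^j = v^n − v^{n−1}; that is, the DOC kernels invert the BDF2 operator. -/
/-!
Exchanging the two summations turns the left-hand side into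
`∑_{k=1}^n (∑_{j=k}^n θ^{(n)}_{n-j} b^{(j)}_{j-k}) ∇_τ v^k`. The recursion defining the DOC kernels
is exactly the equation `∑_{j=k}^n θ^{(n)}_{n-j} b^{(j)}_{j-k} = δ_{kn}` solved for `θ^{(n)}_{n-k}`,
which is possible because positive steps make every leading kernel `b^{(k)}_0` positive.
-/

open Finset

lemma bdf2_zero_pos {τ : ℕ → ℝ} {n : ℕ} (hτ : ∀ k, 1 ≤ k → k ≤ n → 0 < τ k) (hn : 1 ≤ n) :
    0 < bdf2 τ n 0 := by
  rcases eq_or_lt_of_le hn with rfl | hn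
  · simpa [bdf2] using hτ 1 le_rfl le_rfl
  · have hτn : 0 < τ n := hτ n hn.le le_rfl
    have hτn' : 0 < τ (n - 1) := hτ (n - 1) (by omega) (by omega)
    simp only [bdf2, hn.ne', if_false, if_true]
    positivity

lemma doc_succ (τ : ℕ → ℝ) (n g : ℕ) :
    doc τ n (g + 1) = -(1 / bdf2 τ (n - (g + 1)) 0) *
      ∑ i ∈ range (g + 1), doc τ n i * bdf2 τ (n - i) (g + 1 - i) := by
  rw [doc, sum_attach (range (g + 1)) fun i => doc τ n i * bdf2 τ (n - i) (g + 1 - i)]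

lemma sum_Ioc_doc_mul_bdf2 (τ : ℕ → ℝ) {n k : ℕ} (hkn : k ≤ n) :
    ∑ j ∈ Ioc k n, doc τ n (n - j) * bdf2 τ j (j - k) =
      ∑ i ∈ range (n - k), doc τ n i * bdf2 τ (n - i) (n - k - i) := by
  refine sum_nbij' (fun j => n - j) (fun i => n - i) ?_ ?_ ?_ ?_ fun j hj => ?_
  any_goals intro x hx; simp only [mem_Ioc, mem_range] at hx ⊢; omega
  rw [mem_Ioc] at hj
  rw [show n - (n - j) = j by omega, show n - k - (n - j) = j - k by omega]

lemma sum_doc_mul_bdf2 (τ : ℕ → ℝ) {n k : ℕ} (hkn : k ≤ n) (hb : bdf2 τ k 0 ≠ 0) :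
    ∑ j ∈ Icc k n, doc τ n (n - j) * bdf2 τ j (j - k) = if k = n then 1 else 0 := by
  rcases eq_or_lt_of_le hkn with rfl | hlt
  · simp [doc, hb]
  · obtain ⟨g, hg⟩ : ∃ g, n - k = g + 1 := ⟨n - k - 1, by omega⟩
    have hk : n - (g + 1) = k := by omega
    rw [Icc_eq_cons_Ioc hkn, sum_cons, sum_Ioc_doc_mul_bdf2 τ hkn, hg, Nat.sub_self, doc_succ, hk,
      if_neg hlt.ne]
    field_simp
    ring

lemma sum_doc_smul_D2 {V : Type*} [AddCommGroup V] [Module ℝ V] (τ : ℕ → ℝ) (v : ℕ → V) (n : ℕ) :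
    ∑ j ∈ Icc 1 n, doc τ n (n - j) • D2 τ v j =
      ∑ k ∈ Icc 1 n, (∑ j ∈ Icc k n, doc τ n (n - j) * bdf2 τ j (j - k)) • (v k - v (k - 1)) := by
  simp only [D2, smul_sum, smul_smul, sum_smul]
  exact sum_comm' fun j k => by simp only [mem_Icc]; omega

/-- the DOC kernels invert the BDF2 operator:
`∑_{j=1}^n θ^{(n)}_{n-j} D_2 v^j = v^n - v^{n-1}`. -/
theorem doc_inverts_bdf2
    {V : Type*} [AddCommGroup V] [Module ℝ V]
    (N : ℕ) (τ : ℕ → ℝ) (hτ : ∀ k, 1 ≤ k → k ≤ N → 0 < τ k)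
    (v : ℕ → V) :
    ∀ n, 1 ≤ n → n ≤ N →
      ∑ j ∈ Finset.Icc 1 n, doc τ n (n - j) • D2 τ v j = v n - v (n - 1) := by
  intro n hn hnN
  have hdelta : ∀ k ∈ Icc 1 n,
      ∑ j ∈ Icc k n, doc τ n (n - j) * bdf2 τ j (j - k) = if k = n then 1 else 0 := by
    intro k hk
    rw [mem_Icc] at hk
    exact sum_doc_mul_bdf2 τ hk.2
      (bdf2_zero_pos (fun i hi hik => hτ i hi (by omega)) hk.1).ne'
  rw [sum_doc_smul_D2, sum_congr rfl fun k hk => by rw [hdelta k hk]]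
  simp [ite_smul, hn]
end

section
/- Let τ_1, …, τ_N be positive time steps. If the BDF2 kernels are positive semi-definite, i.e. Σ_{k=1}^n w_k Σ_{j=1}^k b^{(k)}_{k−j} w_j ≥ 0 for every 1 ≤ n ≤ N and every real sequence w_1, …, w_n, then the DOC kernels are also positive semi-definite: Σ_{k=1}^n w_k Σ_{j=1}^k θ^{(k)}_{k−j} w_j ≥ 0 for every 1 ≤ n ≤ N and every real sequence w_1, …, w_n. -/
open Finset

/-!
Collect the first `n` kernels into lower-triangular matrices `B` (BDF2) and `Θ` (DOC). The DOC
recursion says exactly that `Θ` is the convolution inverse of the BDF2 kernels, i.e. `Θ * B = 1`.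
Hence for `y := Θᵀ x` one has `xᵀ Θ x = xᵀ Θ B Θᵀ x = yᵀ B y ≥ 0`.
-/

open Matrix

lemma bdf2_zero_pos_s5 {τ : ℕ → ℝ} {k : ℕ} (hk : 0 < τ k) (hprev : k ≠ 1 → 0 < τ (k - 1)) :
    0 < bdf2 τ k 0 := by
  unfold bdf2
  by_cases h1 : k = 1
  · subst h1
    simpa using hk
  · have hr : 0 < τ k / τ (k - 1) := div_pos hk (hprev h1)
    simp only [h1, if_false, if_true]
    positivity

lemma doc_zero_mul_bdf2_zero {τ : ℕ → ℝ} {n : ℕ} (h : bdf2 τ n 0 ≠ 0) :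
    doc τ n 0 * bdf2 τ n 0 = 1 := by
  rw [doc, one_div, inv_mul_cancel₀ h]

lemma sum_range_doc_mul_bdf2 {τ : ℕ → ℝ} {n m : ℕ} (h : bdf2 τ (n - m) 0 ≠ 0) :
    ∑ i ∈ range (m + 1), doc τ n i * bdf2 τ (n - i) (m - i) = if m = 0 then 1 else 0 := by
  rcases m with _ | g
  · simpa using doc_zero_mul_bdf2_zero h
  · rw [sum_range_succ, Nat.sub_self, if_neg (Nat.succ_ne_zero g), doc,
      sum_attach (range (g + 1)) fun i => doc τ n i * bdf2 τ (n - i) (g + 1 - i)]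
    field_simp
    ring

lemma sum_Icc_one_eq_sum_fin {M : Type*} [AddCommMonoid M] (n : ℕ) (f : ℕ → M) :
    ∑ k ∈ Icc 1 n, f k = ∑ i : Fin n, f (i + 1) := by
  rw [Fin.sum_univ_eq_sum_range (fun i => f (i + 1)), range_eq_Ico, sum_Ico_add',
    zero_add, Ico_add_one_right_eq_Icc]

/-- The lower-triangular matrix of a family of convolution kernels `K k j` (`1 ≤ k ≤ n`), with
row/column `i : Fin n` standing for the time level `i + 1`. -/
def kernelMatrix {R : Type*} [Zero R] (K : ℕ → ℕ → R) (n : ℕ) : Matrix (Fin n) (Fin n) R :=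
  Matrix.of fun i j => if (j : ℕ) ≤ i then K (i + 1) (i - j) else 0

section kernelMatrix

variable {R : Type*} [CommSemiring R]

lemma sum_Icc_mul_sum_Icc_eq_dotProduct_mulVec (K : ℕ → ℕ → R) (n : ℕ) (w : ℕ → R) :
    ∑ k ∈ Icc 1 n, w k * ∑ j ∈ Icc 1 k, K k (k - j) * w j =
      (fun i : Fin n => w (i + 1)) ⬝ᵥ (kernelMatrix K n *ᵥ fun i : Fin n => w (i + 1)) := by
  rw [sum_Icc_one_eq_sum_fin]
  refine sum_congr rfl fun i _ => congrArg (w (i + 1) * ·) ?_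
  simp only [kernelMatrix, mulVec, dotProduct, of_apply, ite_mul, zero_mul]
  rw [sum_Icc_one_eq_sum_fin,
    Fin.sum_univ_eq_sum_range (fun j => K (i + 1) (i + 1 - (j + 1)) * w (j + 1)),
    Fin.sum_univ_eq_sum_range (fun j => if j ≤ i then K (i + 1) (i - j) * w (j + 1) else 0),
    ← sum_filter]
  have hrange : {j ∈ range n | j ≤ (i : ℕ)} = range (i + 1) := by
    ext j
    simp only [mem_filter, mem_range]
    have := i.isLt
    omega
  simp only [hrange, Nat.add_sub_add_right]

lemma kernelMatrix_mul_apply (K L : ℕ → ℕ → R) {n : ℕ} (i k : Fin n) :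
    (kernelMatrix K n * kernelMatrix L n) i k =
      if (k : ℕ) ≤ i then ∑ d ∈ range (i - k + 1), K (i + 1) d * L (i + 1 - d) (i - k - d)
      else 0 := by
  simp only [mul_apply, kernelMatrix, of_apply]
  rw [Fin.sum_univ_eq_sum_range fun j =>
    (if j ≤ i then K (i + 1) (i - j) else 0) * (if (k : ℕ) ≤ j then L (j + 1) (j - k) else 0)]
  have hsupp : ∑ j ∈ range n,
      (if j ≤ i then K (i + 1) (i - j) else 0) * (if (k : ℕ) ≤ j then L (j + 1) (j - k) else 0) =
      ∑ j ∈ Icc (k : ℕ) i, K (i + 1) (i - j) * L (j + 1) (j - k) := by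
    symm
    refine sum_subset_zero_on_sdiff (fun j hj => ?_) (fun j hj => ?_) (fun j hj => ?_)
    · simp only [mem_Icc, mem_range] at hj ⊢
      omega
    · simp only [mem_sdiff, mem_Icc, mem_range] at hj
      by_cases hkj : (k : ℕ) ≤ j
      · rw [if_neg (show ¬j ≤ (i : ℕ) by omega), zero_mul]
      · rw [if_neg hkj, mul_zero]
    · simp only [mem_Icc] at hj
      rw [if_pos hj.2, if_pos hj.1]
  rw [hsupp]
  split_ifs with hki
  · refine sum_nbij' (fun j => i - j) (fun d => i - d) ?_ ?_ ?_ ?_ ?_ <;> intro j hj <;>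
      simp only [mem_Icc, mem_range] at hj ⊢ <;> first | omega | congr 2 <;> omega
  · rw [Icc_eq_empty (by omega), sum_empty]

end kernelMatrix

lemma dotProduct_mulVec_nonneg_of_mul_eq_one {m R : Type*} [Fintype m] [DecidableEq m]
    [CommSemiring R] [LE R] {T B : Matrix m m R} (hTB : T * B = 1)
    (hB : ∀ y, 0 ≤ y ⬝ᵥ (B *ᵥ y)) (x : m → R) : 0 ≤ x ⬝ᵥ (T *ᵥ x) := by
  have hx : x ⬝ᵥ (T *ᵥ x) = (x ᵥ* T) ⬝ᵥ (B *ᵥ (x ᵥ* T)) := by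
    rw [dotProduct_mulVec x, dotProduct_mulVec (x ᵥ* T), vecMul_vecMul, hTB, vecMul_one,
      dotProduct_comm]
  exact hx ▸ hB _

lemma kernelMatrix_doc_mul_kernelMatrix_bdf2 {τ : ℕ → ℝ} {n : ℕ}
    (h : ∀ k, 1 ≤ k → k ≤ n → bdf2 τ k 0 ≠ 0) :
    kernelMatrix (doc τ) n * kernelMatrix (bdf2 τ) n = 1 := by
  ext i k
  rw [kernelMatrix_mul_apply, one_apply]
  split_ifs with hki hik hik
  · rw [sum_range_doc_mul_bdf2 (h _ (by omega) (by omega)), if_pos (by simp [hik])]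
  · rw [sum_range_doc_mul_bdf2 (h _ (by omega) (by omega)), if_neg (by omega)]
  · exact absurd (hik ▸ le_rfl) hki
  · rfl

lemma exists_fun_add_one_eq {R : Type*} [Zero R] {n : ℕ} (y : Fin n → R) :
    ∃ w : ℕ → R, (fun i : Fin n => w (i + 1)) = y :=
  ⟨fun k => if h : k - 1 < n then y ⟨k - 1, h⟩ else 0, funext fun i => by simp⟩

/-- positive semi-definiteness of the BDF2 kernels implies that of the DOC kernels. -/
theorem doc_posSemidef_of_bdf2_posSemidef
    (N : ℕ) (τ : ℕ → ℝ) (hτ : ∀ k, 1 ≤ k → k ≤ N → 0 < τ k)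
    (hb : ∀ n, 1 ≤ n → n ≤ N → ∀ w : ℕ → ℝ,
      0 ≤ ∑ k ∈ Finset.Icc 1 n, w k * ∑ j ∈ Finset.Icc 1 k, bdf2 τ k (k - j) * w j) :
    ∀ n, 1 ≤ n → n ≤ N → ∀ w : ℕ → ℝ,
      0 ≤ ∑ k ∈ Finset.Icc 1 n, w k * ∑ j ∈ Finset.Icc 1 k, doc τ k (k - j) * w j := by
  intro n hn hnN w
  have hb0 : ∀ k, 1 ≤ k → k ≤ n → bdf2 τ k 0 ≠ 0 := fun k hk hkn =>
    (bdf2_zero_pos_s5 (hτ k hk (hkn.trans hnN)) fun hk1 => hτ (k - 1) (by omega) (by omega)).ne'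
  rw [sum_Icc_mul_sum_Icc_eq_dotProduct_mulVec]
  refine dotProduct_mulVec_nonneg_of_mul_eq_one (kernelMatrix_doc_mul_kernelMatrix_bdf2 hb0)
    (fun y => ?_) _
  obtain ⟨v, rfl⟩ := exists_fun_add_one_eq y
  rw [← sum_Icc_mul_sum_Icc_eq_dotProduct_mulVec]
  exact hb n hn hnN v
end

section
/- Let H be a real inner product space and L : H → H a linear map that is symmetric (⟨Lw, v⟩ = ⟨w, Lv⟩ for all w, v) and nonpositive (⟨Lw, w⟩ ≤ 0 for all w). Let τ_1, …, τ_{N+1} > 0 be time steps whose ratios satisfy 0 < r_k ≤ (3+√17)/2 for 2 ≤ k ≤ N+1, and let u^0, u^1, …, u^N in H and f^1, …, f^N in H satisfy the BDF2 scheme D_2 u^n = L u^n + f^n for 1 ≤ n ≤ N. Define the discrete energy E^0 := ⟨−L u^0, u^0⟩ and E^k := (r_{k+1}/(1+r_{k+1}))·τ_k·‖(u^k − u^{k−1})/τ_k‖² + ⟨−L u^k, u^k⟩ for 1 ≤ k ≤ N. Then the discrete energy dissipation law holds: E^k − E^{k−1} ≤ 2⟨f^k, u^k − u^{k−1}⟩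 for every 1 ≤ k ≤ N. -/
open Finset

/- ————— auxiliary lemmas ————— -/

lemma ratio_ineq (x y : ℝ) (hx0 : 0 < x) (hx : x ≤ (3 + Real.sqrt 17) / 2)
    (hy0 : 0 < y) (hy : y ≤ (3 + Real.sqrt 17) / 2) :
    y * (1 + x) ≤ (2 + 4 * x - x ^ 2) * (1 + y) := by
  set s := Real.sqrt 17 with hs
  have hs2 : s ^ 2 = 17 := Real.sq_sqrt (by norm_num)
  have hs4 : (4:ℝ) ≤ s := by nlinarith [Real.sqrt_nonneg (17:ℝ)]
  set r := (3 + s) / 2 with hr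
  have hr2 : r ^ 2 = 3 * r + 2 := by rw [hr]; nlinarith [hs2]
  have hrpos : (0:ℝ) < 1 + r := by rw [hr]; nlinarith
  have hA : 0 ≤ (r - x) * ((1 + r) * x + (r - 2)) * (1 + y) := by
    apply mul_nonneg (mul_nonneg (by linarith) (by nlinarith)) (by linarith)
  have hB : 0 ≤ (1 + x) * (r - y) := mul_nonneg (by linarith) (by linarith)
  have hid : (1 + r) * ((2 + 4 * x - x ^ 2) * (1 + y) - y * (1 + x)) =
      (r - x) * ((1 + r) * x + (r - 2)) * (1 + y) + (1 + x) * (r - y) := by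
    linear_combination (-(x + 1) * (1 + y)) * hr2
  nlinarith [mul_pos hrpos hrpos]

lemma key_real (x y τn X Y P QA : ℝ) (hτn : 0 < τn)
    (hx0 : 0 < x) (hx : x ≤ (3 + Real.sqrt 17) / 2)
    (hy0 : 0 < y) (hy : y ≤ (3 + Real.sqrt 17) / 2)
    (hP : P ≤ Y * X) (hQA : QA ≤ 0) :
    y / (1 + y) * X ^ 2 / τn - x ^ 2 / ((1 + x) * τn) * Y ^ 2 ≤
      2 * ((1 + 2 * x) / (τn * (1 + x))) * X ^ 2 +
        2 * (-(x ^ 2) / (τn * (1 + x))) * P - QA := by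
  have h1x : (0:ℝ) < 1 + x := by linarith
  have h1y : (0:ℝ) < 1 + y := by linarith
  have hr := ratio_ineq x y hx0 hx hy0 hy
  have ht1 : 0 ≤ ((2 + 4 * x - x ^ 2) * (1 + y) - y * (1 + x)) / (τn * (1 + x) * (1 + y)) :=
    div_nonneg (by linarith) (by positivity)
  have hC : 0 ≤ x ^ 2 / ((1 + x) * τn) := by positivity
  have hsum : 0 ≤ ((2 + 4 * x - x ^ 2) * (1 + y) - y * (1 + x)) / (τn * (1 + x) * (1 + y)) * X ^ 2
      + x ^ 2 / ((1 + x) * τn) * (X - Y) ^ 2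
      + 2 * (x ^ 2 / ((1 + x) * τn)) * (X * Y - P) - QA := by
    have h1 := mul_nonneg ht1 (sq_nonneg X)
    have h2 := mul_nonneg hC (sq_nonneg (X - Y))
    have h3 := mul_nonneg hC (by linarith : (0:ℝ) ≤ X * Y - P)
    linarith
  have hexpr : 2 * ((1 + 2 * x) / (τn * (1 + x))) * X ^ 2 +
        2 * (-(x ^ 2) / (τn * (1 + x))) * P - QA
      - (y / (1 + y) * X ^ 2 / τn - x ^ 2 / ((1 + x) * τn) * Y ^ 2)
      = ((2 + 4 * x - x ^ 2) * (1 + y) - y * (1 + x)) / (τn * (1 + x) * (1 + y)) * X ^ 2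
      + x ^ 2 / ((1 + x) * τn) * (X - Y) ^ 2
      + 2 * (x ^ 2 / ((1 + x) * τn)) * (X * Y - P) - QA := by
    field_simp
    ring
  linarith

lemma bdf2_ge_two (τ : ℕ → ℝ) (n j : ℕ) (hj : 2 ≤ j) : bdf2 τ n j = 0 := by
  unfold bdf2
  split_ifs <;> first | rfl | omega

lemma D2_one {V : Type*} [AddCommGroup V] [Module ℝ V] (τ : ℕ → ℝ) (u : ℕ → V) :
    D2 τ u 1 = (1 / τ 1) • (u 1 - u 0) := by
  simp [D2, bdf2]

lemma D2_two {V : Type*} [AddCommGroup V] [Module ℝ V] (τ : ℕ → ℝ) (u : ℕ → V) (m : ℕ) :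
    D2 τ u (m + 2) = bdf2 τ (m + 2) 0 • (u (m + 2) - u (m + 1)) +
      bdf2 τ (m + 2) 1 • (u (m + 1) - u m) := by
  unfold D2
  rw [Finset.sum_Icc_succ_top (by omega : 1 ≤ m + 2),
      Finset.sum_Icc_succ_top (by omega : 1 ≤ m + 1)]
  have hz : ∑ k ∈ Finset.Icc 1 m, bdf2 τ (m + 2) (m + 2 - k) • (u k - u (k - 1)) = 0 := by
    apply Finset.sum_eq_zero
    intro k hk
    rw [bdf2_ge_two τ _ _ (by have := Finset.mem_Icc.mp hk; omega), zero_smul]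
  rw [hz]
  have h1 : m + 2 - (m + 1) = 1 := by omega
  have h2 : m + 2 - (m + 2) = 0 := by omega
  rw [h1, h2]
  have h4 : m + 1 - 1 = m := by omega
  have h5 : m + 1 + 1 - 1 = m + 1 := by omega
  have h6 : m + 1 + 1 = m + 2 := by omega
  rw [h4, h5, h6, zero_add]
  abel

lemma key_sym {H : Type*} [NormedAddCommGroup H] [InnerProductSpace ℝ H] (L : H →ₗ[ℝ] H)
    (hsym : ∀ w v : H, (inner ℝ (L w) v : ℝ) = inner ℝ w (L v)) (v w : H) :
    2 * (inner ℝ (L v) (v - w) : ℝ) =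
      (inner ℝ (L v) v : ℝ) - (inner ℝ (L w) w : ℝ) + (inner ℝ (L (v - w)) (v - w) : ℝ) := by
  have h1 : (inner ℝ (L w) v : ℝ) = inner ℝ (L v) w := by
    rw [hsym w v, real_inner_comm]
  simp only [map_sub, inner_sub_left, inner_sub_right]
  linarith

/-- discrete energy dissipation law of the adaptive BDF2 scheme. -/
theorem bdf2_energy_dissipation
    {H : Type*} [NormedAddCommGroup H] [InnerProductSpace ℝ H]
    (L : H →ₗ[ℝ] H)
    (hsym : ∀ w v : H, (inner ℝ (L w) v : ℝ) = inner ℝ w (L v))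
    (hneg : ∀ w : H, (inner ℝ (L w) w : ℝ) ≤ 0)
    (N : ℕ) (τ : ℕ → ℝ)
    (hτ : ∀ k, 1 ≤ k → k ≤ N + 1 → 0 < τ k)
    (hS1 : ∀ k, 2 ≤ k → k ≤ N + 1 →
      0 < τ k / τ (k - 1) ∧ τ k / τ (k - 1) ≤ (3 + Real.sqrt 17) / 2)
    (u f : ℕ → H)
    (hscheme : ∀ n, 1 ≤ n → n ≤ N → D2 τ u n = L (u n) + f n)
    (E : ℕ → ℝ)
    (hE0 : E 0 = (inner ℝ (-L (u 0)) (u 0) : ℝ))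
    (hE : ∀ k, 1 ≤ k → k ≤ N →
      E k = (τ (k + 1) / τ k) / (1 + τ (k + 1) / τ k) * τ k *
              ‖(τ k)⁻¹ • (u k - u (k - 1))‖ ^ 2
            + (inner ℝ (-L (u k)) (u k) : ℝ)) :
    ∀ k, 1 ≤ k → k ≤ N →
      E k - E (k - 1) ≤ 2 * (inner ℝ (f k) (u k - u (k - 1)) : ℝ) := by
  intro k hk1 hkN
  rcases Nat.lt_or_ge k 2 with hk2 | hk2
  · -- case k = 1
    have hk : k = 1 := by omega
    subst hk
    have hτ1 : 0 < τ 1 := hτ 1 le_rfl (by omega)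
    have hτ2 : 0 < τ 2 := hτ 2 (by omega) (by omega)
    have hr2 := hS1 2 le_rfl (by omega)
    rw [show (2:ℕ) - 1 = 1 from rfl] at hr2
    obtain ⟨hy0, hyle⟩ := hr2
    have hs1 := hscheme 1 le_rfl hkN
    rw [D2_one] at hs1
    have heq : (1 / τ 1) * ‖u 1 - u 0‖ ^ 2 =
        (inner ℝ (L (u 1)) (u 1 - u 0) : ℝ) + (inner ℝ (f 1) (u 1 - u 0) : ℝ) := by
      have hc := congrArg (fun z : H => (inner ℝ z (u 1 - u 0) : ℝ)) hs1
      simpa [real_inner_smul_left, inner_add_left, real_inner_self_eq_norm_sq] using hc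
    have hsid := key_sym L hsym (u 1) (u 0)
    have hQA : (inner ℝ (L (u 1 - u 0)) (u 1 - u 0) : ℝ) ≤ 0 := hneg _
    have hnorm : ‖(τ 1)⁻¹ • (u 1 - u 0)‖ ^ 2 = (τ 1)⁻¹ ^ 2 * ‖u 1 - u 0‖ ^ 2 := by
      rw [norm_smul, Real.norm_eq_abs, abs_of_pos (by positivity), mul_pow]
    rw [hE 1 le_rfl hkN, hE0]
    simp only [show (1:ℕ) - 1 = 0 from rfl, show (1:ℕ) + 1 = 2 from rfl, inner_neg_left]
    have hshape : τ 2 / τ 1 / (1 + τ 2 / τ 1) * τ 1 * ‖(τ 1)⁻¹ • (u 1 - u 0)‖ ^ 2 =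
        τ 2 / τ 1 / (1 + τ 2 / τ 1) * (‖u 1 - u 0‖ ^ 2 / τ 1) := by
      have hne : (1 : ℝ) + τ 2 / τ 1 ≠ 0 := by positivity
      rw [hnorm]
      field_simp
    have hd : τ 2 / τ 1 / (1 + τ 2 / τ 1) ≤ 1 := by
      rw [div_le_one (by linarith)]; linarith
    have hprod : 0 ≤ (2 - τ 2 / τ 1 / (1 + τ 2 / τ 1)) * (‖u 1 - u 0‖ ^ 2 / τ 1) :=
      mul_nonneg (by linarith) (by positivity)
    ring_nf at heq hsid hshape hprod ⊢
    linarith [heq, hsid, hQA, hshape, hprod]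
  · -- case k ≥ 2
    obtain ⟨m, rfl⟩ : ∃ m, k = m + 2 := ⟨k - 2, by omega⟩
    have hτn : 0 < τ (m + 2) := hτ _ (by omega) (by omega)
    have hτm : 0 < τ (m + 1) := hτ _ (by omega) (by omega)
    have hτ3 : 0 < τ (m + 3) := hτ _ (by omega) (by omega)
    have hi1 : m + 2 - 1 = m + 1 := rfl
    have hi2 : m + 1 - 1 = m := rfl
    have hrx := hS1 (m + 2) (by omega) (by omega)
    rw [hi1] at hrx
    obtain ⟨hx0, hxle⟩ := hrx
    have hry := hS1 (m + 3) (by omega) (by omega)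
    rw [show m + 3 - 1 = m + 2 from rfl] at hry
    obtain ⟨hy0, hyle⟩ := hry
    have h1x : (0:ℝ) < 1 + τ (m + 2) / τ (m + 1) := by linarith
    have hs := hscheme (m + 2) (by omega) hkN
    rw [D2_two] at hs
    have hb0 : bdf2 τ (m + 2) 0 =
        (1 + 2 * (τ (m + 2) / τ (m + 1))) / (τ (m + 2) * (1 + τ (m + 2) / τ (m + 1))) := by
      simp only [bdf2, if_neg (show ¬ m + 2 = 1 by omega), hi1]
      norm_num
    have hb1 : bdf2 τ (m + 2) 1 =
        -(τ (m + 2) / τ (m + 1)) ^ 2 / (τ (m + 2) * (1 + τ (m + 2) / τ (m + 1))) := by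
      simp only [bdf2, if_neg (show ¬ m + 2 = 1 by omega), hi1]
      norm_num
    rw [hb0, hb1] at hs
    have heq : (1 + 2 * (τ (m + 2) / τ (m + 1))) / (τ (m + 2) * (1 + τ (m + 2) / τ (m + 1))) *
          ‖u (m + 2) - u (m + 1)‖ ^ 2 +
        -(τ (m + 2) / τ (m + 1)) ^ 2 / (τ (m + 2) * (1 + τ (m + 2) / τ (m + 1))) *
          (inner ℝ (u (m + 1) - u m) (u (m + 2) - u (m + 1)) : ℝ) =
        (inner ℝ (L (u (m + 2))) (u (m + 2) - u (m + 1)) : ℝ) +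
          (inner ℝ (f (m + 2)) (u (m + 2) - u (m + 1)) : ℝ) := by
      have hc := congrArg (fun z : H => (inner ℝ z (u (m + 2) - u (m + 1)) : ℝ)) hs
      simpa [real_inner_smul_left, inner_add_left, real_inner_self_eq_norm_sq] using hc
    have hsid := key_sym L hsym (u (m + 2)) (u (m + 1))
    have hQA : (inner ℝ (L (u (m + 2) - u (m + 1))) (u (m + 2) - u (m + 1)) : ℝ) ≤ 0 := hneg _
    have hP : (inner ℝ (u (m + 1) - u m) (u (m + 2) - u (m + 1)) : ℝ) ≤
        ‖u (m + 1) - u m‖ * ‖u (m + 2) - u (m + 1)‖ := real_inner_le_norm _ _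
    have hkey := key_real (τ (m + 2) / τ (m + 1)) (τ (m + 3) / τ (m + 2)) (τ (m + 2))
      ‖u (m + 2) - u (m + 1)‖ ‖u (m + 1) - u m‖
      (inner ℝ (u (m + 1) - u m) (u (m + 2) - u (m + 1)))
      (inner ℝ (L (u (m + 2) - u (m + 1))) (u (m + 2) - u (m + 1)))
      hτn hx0 hxle hy0 hyle hP hQA
    rw [hE (m + 2) (by omega) hkN]
    simp only [hi1]
    rw [hE (m + 1) (by omega) (by omega)]
    simp only [hi2, inner_neg_left, show m + 2 + 1 = m + 3 from rfl,
      show m + 1 + 1 = m + 2 from rfl]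
    have hna : τ (m + 3) / τ (m + 2) / (1 + τ (m + 3) / τ (m + 2)) * τ (m + 2) *
          ‖(τ (m + 2))⁻¹ • (u (m + 2) - u (m + 1))‖ ^ 2 =
        τ (m + 3) / τ (m + 2) / (1 + τ (m + 3) / τ (m + 2)) *
          ‖u (m + 2) - u (m + 1)‖ ^ 2 / τ (m + 2) := by
      have hne : (1 : ℝ) + τ (m + 3) / τ (m + 2) ≠ 0 := by positivity
      rw [norm_smul, Real.norm_eq_abs, abs_of_pos (by positivity), mul_pow]
      field_simp
    have hnb : τ (m + 2) / τ (m + 1) / (1 + τ (m + 2) / τ (m + 1)) * τ (m + 1) *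
          ‖(τ (m + 1))⁻¹ • (u (m + 1) - u m)‖ ^ 2 =
        (τ (m + 2) / τ (m + 1)) ^ 2 / ((1 + τ (m + 2) / τ (m + 1)) * τ (m + 2)) *
          ‖u (m + 1) - u m‖ ^ 2 := by
      have hne : (1 : ℝ) + τ (m + 2) / τ (m + 1) ≠ 0 := by positivity
      rw [norm_smul, Real.norm_eq_abs, abs_of_pos (by positivity), mul_pow]
      field_simp
    ring_nf at hkey heq hsid hna hnb ⊢
    linarith [hkey, heq, hsid, hna, hnb, hQA]
end

section
/- Let E be a real Banach space, let τ_1, …, τ_N > 0 be time steps, fix j with 2 ≤ j ≤ N, and let u : ℝ → E be three times continuously differentiable on [t_{j−2}, t_j]. Define the BDF2 truncation error η^j := b^{(j)}_0·(u(t_j) − u(t_{j−1})) + b^{(j)}_1·(u(t_{j−1}) − u(t_{j−2})) − u'(t_j). Then ‖η^j‖ ≤ b^{(j)}_0·τ_j²·∫_{t_{j−1}}^{t_j} ‖u'''(t)‖ dt + (r_j² τ_{j−1}²/(2(1+2r_j)))·b^{(j)}_0·∫_{t_{j−2}}^{t_{j−1}} ‖u'''(t)‖ dt. -/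
open Finset

/-!
Expanding `u (t_{j-1})` and `u (t_{j-2})` by Taylor's formula about `t_j` with integral
remainder, the BDF2 weights are exactly those that annihilate the `u'`- and `u''`-terms, so
`η^j` is the integral of `u'''` against a Peano kernel. On `[t_{j-1}, t_j]` the kernel factors as
`-(q - x)((p + 2q)x + pq) / (2q(p + q))` with `x = t - t_{j-1}`, `p = τ_{j-1}`, `q = τ_j`, hence is
bounded by `q ≤ b₀ q²`; on `[t_{j-2}, t_{j-1}]` it is `b₁ (t - t_{j-2})² / 2`, bounded by
`|b₁| p² / 2`.
-/

open MeasureTheory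

lemma tlv_eq_add (τ : ℕ → ℝ) {m n : ℕ} (h : m + 1 = n) : tlv τ n = tlv τ m + τ n := by
  subst h
  simp [tlv, Finset.sum_Icc_succ_top (Nat.le_add_left 1 m)]

lemma bdf2_zero_eq {τ : ℕ → ℝ} {n : ℕ} (hn : 2 ≤ n) (hτ : τ (n - 1) ≠ 0) :
    bdf2 τ n 0 = (τ (n - 1) + 2 * τ n) / (τ n * (τ (n - 1) + τ n)) := by
  rw [bdf2, if_neg (by omega), if_pos rfl]
  field_simp

lemma bdf2_one_eq {τ : ℕ → ℝ} {n : ℕ} (hn : 2 ≤ n) (hτ : τ (n - 1) ≠ 0) :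
    bdf2 τ n 1 = -(τ n / (τ (n - 1) * (τ (n - 1) + τ n))) := by
  rw [bdf2, if_neg (by omega), if_neg one_ne_zero, if_pos rfl]
  field_simp

section Coefficients

variable {p q b₀ b₁ : ℝ}

lemma bdf2_first_moment (hp : 0 < p) (hq : 0 < q) (hb₀ : b₀ = (p + 2 * q) / (q * (p + q)))
    (hb₁ : b₁ = -(q / (p * (p + q)))) : b₀ * q + b₁ * p = 1 := by
  rw [hb₀, hb₁]
  field_simp
  ring

lemma bdf2_second_moment (hp : 0 < p) (hq : 0 < q) (hb₀ : b₀ = (p + 2 * q) / (q * (p + q)))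
    (hb₁ : b₁ = -(q / (p * (p + q)))) : b₀ * q ^ 2 + b₁ * ((p + q) ^ 2 - q ^ 2) = 0 := by
  rw [hb₀, hb₁]
  field_simp
  ring

lemma bdf2_kernel_eq (hp : 0 < p) (hq : 0 < q) (hb₀ : b₀ = (p + 2 * q) / (q * (p + q)))
    (hb₁ : b₁ = -(q / (p * (p + q)))) (x : ℝ) :
    (b₀ - b₁) * (x ^ 2 / 2) + b₁ * ((p + x) ^ 2 / 2) =
      -((q - x) * ((p + 2 * q) * x + p * q)) / (2 * q * (p + q)) := by
  rw [hb₀, hb₁]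
  field_simp
  ring

lemma abs_bdf2_kernel_le (hp : 0 < p) (hq : 0 < q) (hb₀ : b₀ = (p + 2 * q) / (q * (p + q)))
    (hb₁ : b₁ = -(q / (p * (p + q)))) {x : ℝ} (hx₀ : 0 ≤ x) (hxq : x ≤ q) :
    |(b₀ - b₁) * (x ^ 2 / 2) + b₁ * ((p + x) ^ 2 / 2)| ≤ b₀ * q ^ 2 := by
  have hkernel : |(b₀ - b₁) * (x ^ 2 / 2) + b₁ * ((p + x) ^ 2 / 2)| ≤ q := by
    have hfactor : 0 ≤ (q - x) * ((p + 2 * q) * x + p * q) :=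
      mul_nonneg (by linarith) (by positivity)
    rw [bdf2_kernel_eq hp hq hb₀ hb₁, abs_div, abs_neg, abs_of_nonneg hfactor,
      abs_of_pos (by positivity), div_le_iff₀ (by positivity)]
    exact mul_le_mul (by linarith) (by nlinarith) (by positivity) hq.le
  have hq_le : q ≤ b₀ * q ^ 2 := by
    have hb₀q : b₀ * q ^ 2 = q * ((p + 2 * q) / (p + q)) := by
      rw [hb₀]
      field_simp
    rw [hb₀q]
    exact le_mul_of_one_le_right hq.le ((one_le_div (by positivity)).2 (by linarith))
  exact hkernel.trans hq_le

lemma abs_bdf2_one_mul_half_sq (hp : 0 < p) (hq : 0 < q) (hb₀ : b₀ = (p + 2 * q) / (q * (p + q)))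
    (hb₁ : b₁ = -(q / (p * (p + q)))) :
    |b₁| * (p ^ 2 / 2) = (q / p) ^ 2 * p ^ 2 / (2 * (1 + 2 * (q / p))) * b₀ := by
  rw [hb₁, abs_neg, abs_of_pos (by positivity), hb₀]
  field_simp

end Coefficients

section PeanoKernel

variable {E : Type*} [NormedAddCommGroup E] [NormedSpace ℝ E]

theorem taylor_two_integral_remainder [CompleteSpace E] {u u' u'' u''' : ℝ → E} {a b : ℝ}
    (hab : a ≤ b)
    (hu : ∀ x ∈ Set.Icc a b, HasDerivWithinAt u (u' x) (Set.Icc a b) x)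
    (hu' : ∀ x ∈ Set.Icc a b, HasDerivWithinAt u' (u'' x) (Set.Icc a b) x)
    (hu'' : ∀ x ∈ Set.Icc a b, HasDerivWithinAt u'' (u''' x) (Set.Icc a b) x)
    (hu''' : ContinuousOn u''' (Set.Icc a b)) :
    u a = u b + (a - b) • u' b + ((a - b) ^ 2 / 2) • u'' b -
      ∫ s in a..b, ((s - a) ^ 2 / 2) • u''' s := by
  set φ : ℝ → E := fun s => u s + (a - s) • u' s + ((a - s) ^ 2 / 2) • u'' s
  have hφ : ∀ x ∈ Set.Icc a b,
      HasDerivWithinAt φ (((x - a) ^ 2 / 2) • u''' x) (Set.Icc a b) x := by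
    intro x hx
    have hlin : HasDerivWithinAt (fun s : ℝ => a - s) (-1) (Set.Icc a b) x :=
      (hasDerivWithinAt_id x _).const_sub a
    refine (((hu x hx).add (hlin.smul (hu' x hx))).add
      (((hlin.fun_pow 2).div_const 2).smul (hu'' x hx))).congr_deriv ?_
    module
  have hint : IntervalIntegrable (fun s => ((s - a) ^ 2 / 2) • u''' s) volume a b :=
    ((((continuous_sub_right a).pow 2).div_const 2).continuousOn.smul
      hu''').intervalIntegrable_of_Icc hab
  have hFTC := intervalIntegral.integral_eq_sub_of_hasDeriv_right_of_le hab
    (fun x hx => (hφ x hx).continuousWithinAt)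
    (fun x hx => ((hφ x (Set.Ioo_subset_Icc_self hx)).hasDerivAt
      (Icc_mem_nhds hx.1 hx.2)).hasDerivWithinAt) hint
  rw [hFTC]
  simp [φ]

theorem norm_integral_smul_le_mul_integral_norm {g : ℝ → ℝ} {f : ℝ → E} {a b C : ℝ}
    (hab : a ≤ b) (hf : IntervalIntegrable f volume a b) (hg : ∀ s ∈ Set.Ioc a b, |g s| ≤ C) :
    ‖∫ s in a..b, g s • f s‖ ≤ C * ∫ s in a..b, ‖f s‖ := by
  rw [← intervalIntegral.integral_const_mul]
  refine intervalIntegral.norm_integral_le_of_norm_le hab (ae_of_all _ fun s hs => ?_)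
    (hf.norm.const_mul C)
  rw [norm_smul, Real.norm_eq_abs]
  exact mul_le_mul_of_nonneg_right (hg s hs) (norm_nonneg _)

theorem three_point_difference_eq_integral [CompleteSpace E] {u u' u'' u''' : ℝ → E}
    {t₀ t₁ t₂ b₀ b₁ : ℝ} (h₀₁ : t₀ ≤ t₁) (h₁₂ : t₁ ≤ t₂)
    (hu : ∀ x ∈ Set.Icc t₀ t₂, HasDerivWithinAt u (u' x) (Set.Icc t₀ t₂) x)
    (hu' : ∀ x ∈ Set.Icc t₀ t₂, HasDerivWithinAt u' (u'' x) (Set.Icc t₀ t₂) x)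
    (hu'' : ∀ x ∈ Set.Icc t₀ t₂, HasDerivWithinAt u'' (u''' x) (Set.Icc t₀ t₂) x)
    (hu''' : ContinuousOn u''' (Set.Icc t₀ t₂))
    (hfirst : b₀ * (t₂ - t₁) + b₁ * (t₁ - t₀) = 1)
    (hsecond : b₀ * (t₂ - t₁) ^ 2 + b₁ * ((t₂ - t₀) ^ 2 - (t₂ - t₁) ^ 2) = 0) :
    b₀ • (u t₂ - u t₁) + b₁ • (u t₁ - u t₀) - u' t₂ =
      (∫ s in t₁..t₂, ((b₀ - b₁) * ((s - t₁) ^ 2 / 2) + b₁ * ((s - t₀) ^ 2 / 2)) • u''' s) +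
        b₁ • ∫ s in t₀..t₁, ((s - t₀) ^ 2 / 2) • u''' s := by
  have hsub : Set.Icc t₁ t₂ ⊆ Set.Icc t₀ t₂ := Set.Icc_subset_Icc h₀₁ le_rfl
  have hint : ∀ c, ∀ {a b}, Set.Icc a b ⊆ Set.Icc t₀ t₂ → a ≤ b →
      IntervalIntegrable (fun s => ((s - c) ^ 2 / 2) • u''' s) volume a b := fun c _ _ h hab =>
    ((((continuous_sub_right c).pow 2).div_const 2).continuousOn.smul
      (hu'''.mono h)).intervalIntegrable_of_Icc hab
  have hT₁ := taylor_two_integral_remainder h₁₂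
    (fun x hx => (hu x (hsub hx)).mono hsub) (fun x hx => (hu' x (hsub hx)).mono hsub)
    (fun x hx => (hu'' x (hsub hx)).mono hsub) (hu'''.mono hsub)
  have hT₀ := taylor_two_integral_remainder (h₀₁.trans h₁₂) hu hu' hu'' hu'''
  rw [← intervalIntegral.integral_add_adjacent_intervals
    (hint t₀ (Set.Icc_subset_Icc le_rfl h₁₂) h₀₁) (hint t₀ hsub h₁₂)] at hT₀
  simp only [add_smul, mul_smul]
  rw [intervalIntegral.integral_add, intervalIntegral.integral_smul,
    intervalIntegral.integral_smul, hT₁, hT₀]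
  · match_scalars
    · ring
    · linear_combination hfirst
    · linear_combination (-1 / 2 : ℝ) * hsecond
    all_goals ring
  · exact (hint t₁ hsub h₁₂).smul (b₀ - b₁)
  · exact (hint t₀ hsub h₁₂).smul b₁

theorem norm_bdf2_truncation_le [CompleteSpace E] {u u' u'' u''' : ℝ → E}
    {t₀ t₁ t₂ p q b₀ b₁ : ℝ} (hp : 0 < p) (hq : 0 < q) (ht₁ : t₁ = t₀ + p) (ht₂ : t₂ = t₁ + q)
    (hb₀ : b₀ = (p + 2 * q) / (q * (p + q))) (hb₁ : b₁ = -(q / (p * (p + q))))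
    (hu : ∀ x ∈ Set.Icc t₀ t₂, HasDerivWithinAt u (u' x) (Set.Icc t₀ t₂) x)
    (hu' : ∀ x ∈ Set.Icc t₀ t₂, HasDerivWithinAt u' (u'' x) (Set.Icc t₀ t₂) x)
    (hu'' : ∀ x ∈ Set.Icc t₀ t₂, HasDerivWithinAt u'' (u''' x) (Set.Icc t₀ t₂) x)
    (hu''' : ContinuousOn u''' (Set.Icc t₀ t₂)) :
    ‖b₀ • (u t₂ - u t₁) + b₁ • (u t₁ - u t₀) - u' t₂‖ ≤
      b₀ * q ^ 2 * (∫ t in t₁..t₂, ‖u''' t‖) +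
        (q / p) ^ 2 * p ^ 2 / (2 * (1 + 2 * (q / p))) * b₀ * (∫ t in t₀..t₁, ‖u''' t‖) := by
  have h₀₁ : t₀ ≤ t₁ := by linarith
  have h₁₂ : t₁ ≤ t₂ := by linarith
  have hfirst : b₀ * (t₂ - t₁) + b₁ * (t₁ - t₀) = 1 := by
    rw [ht₂, ht₁]
    linear_combination bdf2_first_moment hp hq hb₀ hb₁
  have hsecond : b₀ * (t₂ - t₁) ^ 2 + b₁ * ((t₂ - t₀) ^ 2 - (t₂ - t₁) ^ 2) = 0 := by
    rw [ht₂, ht₁]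
    linear_combination bdf2_second_moment hp hq hb₀ hb₁
  rw [three_point_difference_eq_integral h₀₁ h₁₂ hu hu' hu'' hu''' hfirst hsecond]
  refine (norm_add_le _ _).trans (add_le_add ?_ ?_)
  · refine norm_integral_smul_le_mul_integral_norm h₁₂
      ((hu'''.mono (Set.Icc_subset_Icc h₀₁ le_rfl)).intervalIntegrable_of_Icc h₁₂) fun s hs => ?_
    have hK := abs_bdf2_kernel_le hp hq hb₀ hb₁ (x := s - t₁) (by linarith [hs.1])
      (by linarith [hs.2])
    rwa [show p + (s - t₁) = s - t₀ by linarith] at hK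
  · rw [norm_smul, Real.norm_eq_abs, ← abs_bdf2_one_mul_half_sq hp hq hb₀ hb₁, mul_assoc]
    refine mul_le_mul_of_nonneg_left (norm_integral_smul_le_mul_integral_norm h₀₁
      ((hu'''.mono (Set.Icc_subset_Icc le_rfl h₁₂)).intervalIntegrable_of_Icc h₀₁)
      fun s hs => ?_) (abs_nonneg _)
    have hsq : (s - t₀) ^ 2 ≤ p ^ 2 :=
      pow_le_pow_left₀ (by linarith [hs.1]) (by linarith [hs.2]) 2
    rw [abs_of_nonneg (by positivity)]
    linarith

end PeanoKernel

/-- bound for the BDF2 truncation error `η^j` (`j ≥ 2`). -/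
theorem bdf2_truncation_error_bound
    {E : Type*} [NormedAddCommGroup E] [NormedSpace ℝ E] [CompleteSpace E]
    (N : ℕ) (τ : ℕ → ℝ) (hτ : ∀ k, 1 ≤ k → k ≤ N → 0 < τ k)
    (j : ℕ) (hj2 : 2 ≤ j) (hjN : j ≤ N)
    (u u' u'' u''' : ℝ → E)
    (hu' : ∀ x ∈ Set.Icc (tlv τ (j - 2)) (tlv τ j),
      HasDerivWithinAt u (u' x) (Set.Icc (tlv τ (j - 2)) (tlv τ j)) x)
    (hu'' : ∀ x ∈ Set.Icc (tlv τ (j - 2)) (tlv τ j),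
      HasDerivWithinAt u' (u'' x) (Set.Icc (tlv τ (j - 2)) (tlv τ j)) x)
    (hu''' : ∀ x ∈ Set.Icc (tlv τ (j - 2)) (tlv τ j),
      HasDerivWithinAt u'' (u''' x) (Set.Icc (tlv τ (j - 2)) (tlv τ j)) x)
    (hcont : ContinuousOn u''' (Set.Icc (tlv τ (j - 2)) (tlv τ j))) :
    ‖bdf2 τ j 0 • (u (tlv τ j) - u (tlv τ (j - 1))) +
        bdf2 τ j 1 • (u (tlv τ (j - 1)) - u (tlv τ (j - 2))) - u' (tlv τ j)‖ ≤
      bdf2 τ j 0 * τ j ^ 2 * (∫ t in (tlv τ (j - 1))..(tlv τ j), ‖u''' t‖) +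
        (τ j / τ (j - 1)) ^ 2 * τ (j - 1) ^ 2 / (2 * (1 + 2 * (τ j / τ (j - 1)))) *
          bdf2 τ j 0 * (∫ t in (tlv τ (j - 2))..(tlv τ (j - 1)), ‖u''' t‖) := by
  have hp : 0 < τ (j - 1) := hτ (j - 1) (by omega) (by omega)
  have hq : 0 < τ j := hτ j (by omega) hjN
  exact norm_bdf2_truncation_le hp hq (tlv_eq_add τ (by omega)) (tlv_eq_add τ (by omega))
    (bdf2_zero_eq hj2 hp.ne') (bdf2_one_eq hj2 hp.ne') hu' hu'' hu''' hcont
end
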